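/- For a general linear quantum system, define Ker(O_s) := ⋂_{k=0}^{2n-1} Ker(𝒞 (J_n Ω)^k) and Ker(O_s J_n) := ⋂_{k=0}^{2n-1} Ker(𝒞 (J_n Ω)^k J_n). Suppose that Ker(𝒞)^⊥ is orthogonal to Ker(O_s J_n), i.e. every vector in the column space of 𝒞ᴴ is orthogonal to every vector of Ker(O_s J_n). Then: (a) the column space of ℬ is orthogonal to R̃_cō := Ker(O_s J_n)^⊥ ∩ Ker(O_s); and (b) R̃_c̄o := Ker(O_s J_n) ∩ Ker(O_s)^⊥ is contained in Ker(𝒞). -/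

import Mathlib

open Matrix

noncomputable section

/-- `J_k = [I 0; 0 -I]` acting on `ℂ^{2k} = ℂ^k ⊕ ℂ^k`. -/
def Jmat (k : ℕ) : Matrix (Fin k ⊕ Fin k) (Fin k ⊕ Fin k) ℂ :=
  Matrix.fromBlocks 1 0 0 (-1)

/-- Entrywise complex conjugation of a matrix. -/
def mconj {α β : Type} (M : Matrix α β ℂ) : Matrix α β ℂ :=
  M.map (starRingEnd ℂ)

/-- The doubled-up matrix `Δ(U,V) = [U V; conj V  conj U]`. -/
def doubledUp {k r : ℕ} (U V : Matrix (Fin k) (Fin r) ℂ) :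
    Matrix (Fin k ⊕ Fin k) (Fin r ⊕ Fin r) ℂ :=
  Matrix.fromBlocks U V (mconj V) (mconj U)

/-- The ♭-adjoint `X♭ = J_r Xᴴ J_k` of `X ∈ ℂ^{2k×2r}`. -/
def flat {k r : ℕ} (X : Matrix (Fin k ⊕ Fin k) (Fin r ⊕ Fin r) ℂ) :
    Matrix (Fin r ⊕ Fin r) (Fin k ⊕ Fin k) ℂ :=
  Jmat r * Xᴴ * Jmat k

/-- Orthogonal complement of a subspace of `ℂ^ι` w.r.t. the standard Hermitian
inner product `⟪y, x⟫ = (star y) ⬝ᵥ x`. -/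
def orthComp {ι : Type} [Fintype ι] (S : Submodule ℂ (ι → ℂ)) : Submodule ℂ (ι → ℂ) where
  carrier := {x | ∀ y ∈ S, star y ⬝ᵥ x = 0}
  add_mem' := by
    intro a b ha hb y hy
    simp only [Set.mem_setOf_eq] at *
    rw [dotProduct_add, ha y hy, hb y hy, add_zero]
  zero_mem' := by
    intro y hy
    simp
  smul_mem' := by
    intro c x hx y hy
    simp only [Set.mem_setOf_eq] at *
    rw [dotProduct_smul, hx y hy, smul_zero]

/-- The controllable subspace `Im(C_G) = ∑_{k<2n} Im(𝒜ᵏℬ)`. -/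
def ctrbSub (n m : ℕ) (𝒜 : Matrix (Fin n ⊕ Fin n) (Fin n ⊕ Fin n) ℂ)
    (ℬ : Matrix (Fin n ⊕ Fin n) (Fin m ⊕ Fin m) ℂ) : Submodule ℂ (Fin n ⊕ Fin n → ℂ) :=
  ⨆ k ∈ Finset.range (2 * n), LinearMap.range ((𝒜 ^ k * ℬ).mulVecLin)

/-- The unobservable subspace `Ker(O_G) = ⋂_{k<2n} Ker(𝒞𝒜ᵏ)`. -/
def unobsSub (n m : ℕ) (𝒜 : Matrix (Fin n ⊕ Fin n) (Fin n ⊕ Fin n) ℂ)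
    (𝒞 : Matrix (Fin m ⊕ Fin m) (Fin n ⊕ Fin n) ℂ) : Submodule ℂ (Fin n ⊕ Fin n → ℂ) :=
  ⨅ k ∈ Finset.range (2 * n), LinearMap.ker ((𝒞 * 𝒜 ^ k).mulVecLin)

/-!
The hypothesis forces `Ker(O_s J_n) ⊆ Ker 𝒞`, which is (b). Since `J_n² = 1`, `J_n` maps
`Ker(O_s)` into `Ker(O_s J_n)`, so `𝒞 J_n y = 0` for `y ∈ Ker(O_s)`; as `ℬᴴ = -J_m 𝒞 J_n`,
such `y` lie in `Ker ℬᴴ = (Im ℬ)^⊥`, which is (a).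
-/

theorem mulVec_eq_zero_of_orthogonal_range_conjTranspose {R ι κ : Type*} [CommRing R]
    [StarRing R] [Fintype ι] [Fintype κ] [DecidableEq ι] {C : Matrix ι κ R} {z : κ → R}
    (h : ∀ x ∈ LinearMap.range Cᴴ.mulVecLin, star x ⬝ᵥ z = 0) : C *ᵥ z = 0 := by
  funext j
  have hj := h (Cᴴ *ᵥ Pi.single j 1) ⟨Pi.single j 1, rfl⟩
  rwa [star_mulVec, conjTranspose_conjTranspose, ← dotProduct_mulVec, ← Pi.single_star, star_one,
    single_one_dotProduct] at hj

theorem mulVec_mem_iInf_ker_mul_of_mul_self_eq_one {R ι κ α : Type*} [CommRing R]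
    [Fintype κ] [DecidableEq κ] {J : Matrix κ κ R} (hJ : J * J = 1) {A : α → Matrix ι κ R}
    {s : Finset α} {y : κ → R} (hy : y ∈ ⨅ k ∈ s, LinearMap.ker (A k).mulVecLin) :
    J *ᵥ y ∈ ⨅ k ∈ s, LinearMap.ker (A k * J).mulVecLin := by
  simp only [Submodule.mem_iInf, LinearMap.mem_ker, mulVecLin_apply] at hy ⊢
  intro k hk
  rw [mulVec_mulVec, Matrix.mul_assoc, hJ, Matrix.mul_one]
  exact hy k hk

theorem Jmat_conjTranspose (k : ℕ) : (Jmat k)ᴴ = Jmat k := by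
  simp [Jmat, fromBlocks_conjTranspose]

theorem Jmat_mul_Jmat (k : ℕ) : Jmat k * Jmat k = 1 := by
  simp [Jmat, fromBlocks_multiply, ← fromBlocks_one]

theorem star_flat_mulVec_dotProduct {k r : ℕ}
    (X : Matrix (Fin k ⊕ Fin k) (Fin r ⊕ Fin r) ℂ) (v : Fin k ⊕ Fin k → ℂ)
    (y : Fin r ⊕ Fin r → ℂ) :
    star (flat X *ᵥ v) ⬝ᵥ y = star v ⬝ᵥ (Jmat k *ᵥ (X *ᵥ (Jmat r *ᵥ y))) := by
  rw [star_mulVec, ← dotProduct_mulVec, flat, conjTranspose_mul, conjTranspose_mul,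
    Jmat_conjTranspose, Jmat_conjTranspose, conjTranspose_conjTranspose, mulVec_mulVec,
    mulVec_mulVec, Matrix.mul_assoc]

theorem prop_co_vanishing_general
    (n m : ℕ)
    (Ω : Matrix (Fin n ⊕ Fin n) (Fin n ⊕ Fin n) ℂ)
    (𝒞 : Matrix (Fin m ⊕ Fin m) (Fin n ⊕ Fin n) ℂ)
    (ℬ : Matrix (Fin n ⊕ Fin n) (Fin m ⊕ Fin m) ℂ) (hℬ : ℬ = -flat 𝒞)
    (KOs : Submodule ℂ (Fin n ⊕ Fin n → ℂ))
    (hKOs : KOs = ⨅ k ∈ Finset.range (2 * n),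
      LinearMap.ker ((𝒞 * (Jmat n * Ω) ^ k).mulVecLin))
    (KOsJ : Submodule ℂ (Fin n ⊕ Fin n → ℂ))
    (hKOsJ : KOsJ = ⨅ k ∈ Finset.range (2 * n),
      LinearMap.ker ((𝒞 * (Jmat n * Ω) ^ k * Jmat n).mulVecLin))
    (hperp : ∀ x ∈ LinearMap.range (𝒞ᴴ.mulVecLin), ∀ y ∈ KOsJ, star x ⬝ᵥ y = 0) :
    (∀ x ∈ LinearMap.range ℬ.mulVecLin, ∀ y ∈ orthComp KOsJ ⊓ KOs, star x ⬝ᵥ y = 0) ∧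
    (KOsJ ⊓ orthComp KOs ≤ LinearMap.ker 𝒞.mulVecLin) := by
  have hker : KOsJ ≤ LinearMap.ker 𝒞.mulVecLin := fun z hz =>
    mulVec_eq_zero_of_orthogonal_range_conjTranspose fun x hx => hperp x hx z hz
  have hJ : ∀ y ∈ KOs, Jmat n *ᵥ y ∈ KOsJ := by
    rw [hKOs, hKOsJ]
    exact fun _ => mulVec_mem_iInf_ker_mul_of_mul_self_eq_one (Jmat_mul_Jmat n)
  refine ⟨?_, inf_le_left.trans hker⟩
  rintro _ ⟨v, rfl⟩ y ⟨-, hy⟩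
  have hCJy : 𝒞 *ᵥ (Jmat n *ᵥ y) = 0 := hker (hJ y hy)
  rw [mulVecLin_apply, hℬ, neg_mulVec, star_neg, neg_dotProduct, star_flat_mulVec_dotProduct,
    hCJy, mulVec_zero, dotProduct_zero, neg_zero]

/-- **Proposition 2.** For a general linear quantum system, if every vector in the column
space of `𝒞ᴴ` is orthogonal to every vector of `Ker(O_s J_n)`, then (a) the column space
of `ℬ` is orthogonal to `R̃_cō = Ker(O_s J_n)^⊥ ∩ Ker(O_s)`, and (b)
`R̃_c̄o = Ker(O_s J_n) ∩ Ker(O_s)^⊥ ⊆ Ker(𝒞)`. -/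
theorem prop_co_vanishing
    (n m : ℕ) (hn : 0 < n) (hm : 0 < m)
    (Ωm Ωp : Matrix (Fin n) (Fin n) ℂ) (Cm Cp : Matrix (Fin m) (Fin n) ℂ)
    (Ω : Matrix (Fin n ⊕ Fin n) (Fin n ⊕ Fin n) ℂ) (hΩ : Ω = doubledUp Ωm Ωp)
    (hΩH : Ω.IsHermitian)
    (𝒞 : Matrix (Fin m ⊕ Fin m) (Fin n ⊕ Fin n) ℂ) (h𝒞 : 𝒞 = doubledUp Cm Cp)
    (𝒜 : Matrix (Fin n ⊕ Fin n) (Fin n ⊕ Fin n) ℂ)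
    (h𝒜 : 𝒜 = (-Complex.I) • (Jmat n * Ω) - (1 / 2 : ℂ) • (flat 𝒞 * 𝒞))
    (ℬ : Matrix (Fin n ⊕ Fin n) (Fin m ⊕ Fin m) ℂ) (hℬ : ℬ = -flat 𝒞)
    (KOs : Submodule ℂ (Fin n ⊕ Fin n → ℂ))
    (hKOs : KOs = ⨅ k ∈ Finset.range (2 * n),
      LinearMap.ker ((𝒞 * (Jmat n * Ω) ^ k).mulVecLin))
    (KOsJ : Submodule ℂ (Fin n ⊕ Fin n → ℂ))
    (hKOsJ : KOsJ = ⨅ k ∈ Finset.range (2 * n),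
      LinearMap.ker ((𝒞 * (Jmat n * Ω) ^ k * Jmat n).mulVecLin))
    (hperp : ∀ x ∈ LinearMap.range (𝒞ᴴ.mulVecLin), ∀ y ∈ KOsJ, star x ⬝ᵥ y = 0) :
    (∀ x ∈ LinearMap.range ℬ.mulVecLin, ∀ y ∈ orthComp KOsJ ⊓ KOs, star x ⬝ᵥ y = 0) ∧
    (KOsJ ⊓ orthComp KOs ≤ LinearMap.ker 𝒞.mulVecLin) :=
  prop_co_vanishing_general n m Ω 𝒞 ℬ hℬ KOs hKOs KOsJ hKOsJ hperp

end
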